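/- Let u: (0,∞) → ℝ be strictly concave and differentiable with strictly decreasing derivative u', let I = (u')⁻¹, and let z, y₁, y₂, q > 0. Then the function f(x) = u(x) - y₁ z x - y₂ max(q - x, 0) on (0,∞) attains its maximum at x* given by: x* = I(y₁ z) if y₁ z < u'(q); x* = q if u'(q) ≤ y₁ z < u'(q) + y₂; and x* = I(y₁ z - y₂) if u'(q) + y₂ ≤ y₁ z. -/

import Mathlib

/-!
With `a = y₁ z` and `b = y₂`, the objective is the concave `u x - a x` plus the concave hinge
`-b (q - x)⁺`, so `t` maximises it as soon as `u' t = a - b θ` for some `-θ` in the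
subdifferential of `(q - ·)⁺` at `t`: `θ = 1` left of the kink, `θ = 0` right of it,
`θ ∈ [0, 1]` at `t = q`. The three candidates `x*` are such points, with `θ = 0`,
`θ = (a - u' q) / b` and `θ = 1`; in the last regime `a - b` may be nonpositive, and
Darboux's theorem, applied between `q` and `I a`, shows that it is still a value of `u'`.
-/

open Set

theorem ConcaveOn.le_add_mul_sub_of_hasDerivAt {S : Set ℝ} {f : ℝ → ℝ} {f' x y : ℝ}
    (hf : ConcaveOn ℝ S f) (hx : x ∈ S) (hy : y ∈ S) (hf' : HasDerivAt f f' x) :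
    f y ≤ f x + f' * (y - x) := by
  rcases lt_trichotomy x y with hxy | rfl | hyx
  · have h := hf.slope_le_of_hasDerivAt hx hy hxy hf'
    rw [slope_def_field, div_le_iff₀ (sub_pos.mpr hxy)] at h
    linarith
  · simp
  · have h := hf.le_slope_of_hasDerivAt hy hx hyx hf'
    rw [slope_def_field, le_div_iff₀ (sub_pos.mpr hyx)] at h
    linarith

theorem max_sub_zero_sub_mul_le {q t θ : ℝ} (hθ₀ : 0 ≤ θ) (hθ₁ : θ ≤ 1)
    (hlt : t < q → θ = 1) (hgt : q < t → θ = 0) (x : ℝ) :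
    max (q - t) 0 - θ * (x - t) ≤ max (q - x) 0 := by
  rcases lt_trichotomy t q with htq | rfl | hqt
  · rw [hlt htq, max_eq_left (sub_nonneg.mpr htq.le)]
    linarith [le_max_left (q - x) 0]
  · rw [sub_self, max_self, zero_sub, ← mul_neg, neg_sub]
    rcases le_total x t with hxt | htx
    · rw [max_eq_left (sub_nonneg.mpr hxt)]
      nlinarith
    · rw [max_eq_right (sub_nonpos.mpr htx)]
      nlinarith
  · rw [hgt hqt, max_eq_right (sub_nonpos.mpr hqt.le)]
    simp

theorem isMaxOn_sub_mul_sub_mul_max_of_hasDerivAt {S : Set ℝ} {u : ℝ → ℝ}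
    (hu : ConcaveOn ℝ S u) {a b q t θ : ℝ} (hb : 0 ≤ b) (ht : t ∈ S) (hθ₀ : 0 ≤ θ) (hθ₁ : θ ≤ 1)
    (hlt : t < q → θ = 1) (hgt : q < t → θ = 0) (hderiv : HasDerivAt u (a - b * θ) t) :
    IsMaxOn (fun x : ℝ => u x - a * x - b * max (q - x) 0) S t := by
  intro x hx
  have htangent := hu.le_add_mul_sub_of_hasDerivAt ht hx hderiv
  have hhinge := mul_le_mul_of_nonneg_left (max_sub_zero_sub_mul_le hθ₀ hθ₁ hlt hgt x) hb
  change u x - a * x - b * max (q - x) 0 ≤ u t - a * t - b * max (q - t) 0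
  linarith

theorem stmt_1 (u u' I : ℝ → ℝ)
    (hconc : StrictConcaveOn ℝ (Set.Ioi 0) u)
    (hderiv : ∀ x ∈ Set.Ioi (0 : ℝ), HasDerivAt u (u' x) x)
    (hanti : StrictAntiOn u' (Set.Ioi 0))
    (hIpos : ∀ y > (0 : ℝ), I y ∈ Set.Ioi (0 : ℝ))
    (hI : ∀ y > (0 : ℝ), u' (I y) = y)
    (hI' : ∀ x ∈ Set.Ioi (0 : ℝ), I (u' x) = x)
    (z y₁ y₂ q : ℝ) (hz : 0 < z) (hy₁ : 0 < y₁) (hy₂ : 0 < y₂) (hq : 0 < q)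
    (xstar : ℝ)
    (hx : xstar =
      if y₁ * z < u' q then I (y₁ * z)
      else if y₁ * z < u' q + y₂ then q
      else I (y₁ * z - y₂)) :
    IsMaxOn (fun x : ℝ => u x - y₁ * z * x - y₂ * max (q - x) 0) (Set.Ioi 0) xstar := by
  have ha : 0 < y₁ * z := mul_pos hy₁ hz
  have hIa : I (y₁ * z) ∈ Ioi 0 := hIpos _ ha
  have hu'Ia : u' (I (y₁ * z)) = y₁ * z := hI _ ha
  subst hx
  split_ifs with h₁ h₂
  · have hqI : q < I (y₁ * z) := (hanti.lt_iff_gt hIa hq).mp (by rwa [hu'Ia])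
    refine isMaxOn_sub_mul_sub_mul_max_of_hasDerivAt hconc.concaveOn hy₂.le hIa le_rfl
      zero_le_one (fun h => absurd h (lt_asymm hqI)) (fun _ => rfl) ?_
    simpa [hu'Ia] using hderiv _ hIa
  · refine isMaxOn_sub_mul_sub_mul_max_of_hasDerivAt (θ := (y₁ * z - u' q) / y₂)
      hconc.concaveOn hy₂.le hq (div_nonneg (by linarith) hy₂.le)
      ((div_le_one hy₂).mpr (by linarith)) (absurd · (lt_irrefl q)) (absurd · (lt_irrefl q)) ?_
    convert hderiv q hq using 1
    field_simp
    ring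
  · obtain ⟨t, ht, hu't⟩ : y₁ * z - y₂ ∈ u' '' Ioi 0 :=
      (ordConnected_Ioi.image_hasDerivWithinAt fun x hx => (hderiv x hx).hasDerivWithinAt).out
        ⟨q, hq, rfl⟩ ⟨_, hIa, hu'Ia⟩ ⟨by linarith, by linarith⟩
    have htq : t ≤ q := (hanti.le_iff_ge hq ht).mp (by linarith)
    rw [← hu't, hI' t ht]
    refine isMaxOn_sub_mul_sub_mul_max_of_hasDerivAt hconc.concaveOn hy₂.le ht zero_le_one
      le_rfl (fun _ => rfl) (fun h => absurd h htq.not_gt) ?_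
    simpa [hu't] using hderiv t ht
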